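/- arXiv:2401.03330 — 7 statements merged into one kernel-verified Lean document; each statement's English description precedes it below -/
import Mathlib

section
/- Let N = 2mp, let T, S ∈ ℝ^{N×N} with T invertible, and let W ∈ ℝ^{N×2p}. Let E₁ ∈ ℝ^{N×p} denote the first p columns of the N×N identity matrix, and E_m ∈ ℝ^{N×2p} the last 2p columns. Suppose T·S = I_N − W·E_mᵀ and E_mᵀ·S^k·E₁ = 0 for every integer k with 0 ≤ k ≤ m−1. Then for every integer j with 1 ≤ j ≤ m, one has T^j·S^j·E₁ = E₁, equivalently S^j·E₁ = T^{−j}·E₁. -/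
open Matrix

/-- The `N × q` matrix consisting of the first `q` columns of the `N × N` identity matrix. -/
def firstCols (N q : ℕ) : Matrix (Fin N) (Fin q) ℝ :=
  Matrix.of fun i j => if (i : ℕ) = (j : ℕ) then 1 else 0

/-- The `N × q` matrix consisting of the last `q` columns of the `N × N` identity matrix. -/
def lastCols (N q : ℕ) : Matrix (Fin N) (Fin q) ℝ :=
  Matrix.of fun i j => if (i : ℕ) = N - q + (j : ℕ) then 1 else 0

/-- If `T` is invertible, `T·S = I − W·E_mᵀ`, and `E_mᵀ·S^k·E₁ = 0` for
`0 ≤ k ≤ m − 1`, then `T^j·S^j·E₁ = E₁`, equivalently `S^j·E₁ = T^{−j}·E₁`, for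
`1 ≤ j ≤ m`. -/
theorem positive_negative_powers
    (p m : ℕ) (hp : 0 < p) (hm : 0 < m)
    (T S : Matrix (Fin (2 * m * p)) (Fin (2 * m * p)) ℝ)
    (hT : IsUnit T.det)
    (W : Matrix (Fin (2 * m * p)) (Fin (2 * p)) ℝ)
    (hTS : T * S = 1 - W * (lastCols (2 * m * p) (2 * p))ᵀ)
    (hSk : ∀ k : ℕ, k ≤ m - 1 →
      (lastCols (2 * m * p) (2 * p))ᵀ * S ^ k * firstCols (2 * m * p) p = 0) :
    ∀ j : ℕ, 1 ≤ j → j ≤ m →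
      T ^ j * S ^ j * firstCols (2 * m * p) p = firstCols (2 * m * p) p ∧
      S ^ j * firstCols (2 * m * p) p = T⁻¹ ^ j * firstCols (2 * m * p) p := by
  -- main induction: prove first part for all j ≤ m (with 1 ≤ j)
  have key : ∀ j : ℕ, j ≤ m →
      T ^ j * S ^ j * firstCols (2 * m * p) p = firstCols (2 * m * p) p := by
    intro j
    induction j with
    | zero => intro _; simp
    | succ n ih =>
      intro hjm
      have hn : n ≤ m := Nat.le_of_succ_le hjm
      have hnm1 : n ≤ m - 1 := Nat.le_sub_one_of_lt hjm
      have hE : (lastCols (2 * m * p) (2 * p))ᵀ * S ^ n * firstCols (2 * m * p) p = 0 :=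
        hSk n hnm1
      have step : T ^ (n+1) * S ^ (n+1) * firstCols (2 * m * p) p
          = T ^ n * ((T * S) * (S ^ n * firstCols (2 * m * p) p)) := by
        rw [pow_succ, pow_succ']
        simp only [Matrix.mul_assoc]
      rw [step, hTS, Matrix.sub_mul, Matrix.one_mul]
      have : W * (lastCols (2 * m * p) (2 * p))ᵀ * (S ^ n * firstCols (2 * m * p) p) = 0 := by
        rw [Matrix.mul_assoc, ← Matrix.mul_assoc (lastCols (2 * m * p) (2 * p))ᵀ, hE,
          Matrix.mul_zero]
      rw [this, sub_zero, ← Matrix.mul_assoc]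
      exact ih hn
  intro j hj1 hjm
  have h1 := key j hjm
  refine ⟨h1, ?_⟩
  have hinv : ∀ n : ℕ, T⁻¹ ^ n * T ^ n = 1 := by
    intro n
    induction n with
    | zero => simp
    | succ k ih2 =>
      rw [pow_succ, pow_succ', Matrix.mul_assoc, ← Matrix.mul_assoc T⁻¹,
        Matrix.nonsing_inv_mul T hT, Matrix.one_mul, ih2]
  have h2 : T⁻¹ ^ j * (T ^ j * S ^ j * firstCols (2 * m * p) p)
      = T⁻¹ ^ j * firstCols (2 * m * p) p := by rw [h1]
  rw [← Matrix.mul_assoc, ← Matrix.mul_assoc, hinv j, Matrix.one_mul] at h2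
  exact h2
end

section
/- Let A ∈ ℝ^{n×n}, V ∈ ℝ^{n×N} with N = 2mp, T ∈ ℝ^{N×N}, and K ∈ ℝ^{n×2p}. Let E₁ ∈ ℝ^{N×p} denote the first p columns of the N×N identity matrix and E_m ∈ ℝ^{N×2p} the last 2p columns. Suppose A·V = V·T + K·E_mᵀ and E_mᵀ·T^k·E₁ = 0 for every integer k with 0 ≤ k ≤ m−2. Set V₁ := V·E₁. Then for every integer j with 0 ≤ j ≤ m−1, one has A^j·V₁ = V·T^j·E₁. -/
open Matrix

/-- If `A·V = V·T + K·E_mᵀ` and `E_mᵀ·T^k·E₁ = 0` for `0 ≤ k ≤ m − 2`, then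
with `V₁ := V·E₁`, one has `A^j·V₁ = V·T^j·E₁` for `0 ≤ j ≤ m − 1`. -/
theorem exactness_positive_powers
    (n p m : ℕ) (hn : 0 < n) (hp : 0 < p) (hm : 0 < m)
    (A : Matrix (Fin n) (Fin n) ℝ)
    (V : Matrix (Fin n) (Fin (2 * m * p)) ℝ)
    (T : Matrix (Fin (2 * m * p)) (Fin (2 * m * p)) ℝ)
    (K : Matrix (Fin n) (Fin (2 * p)) ℝ)
    (hdec : A * V = V * T + K * (lastCols (2 * m * p) (2 * p))ᵀ)
    (hTk : ∀ k : ℕ, k ≤ m - 2 →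
      (lastCols (2 * m * p) (2 * p))ᵀ * T ^ k * firstCols (2 * m * p) p = 0) :
    ∀ j : ℕ, j ≤ m - 1 →
      A ^ j * (V * firstCols (2 * m * p) p) = V * T ^ j * firstCols (2 * m * p) p := by
  intro j
  induction j with
  | zero => intro _; simp [Matrix.mul_assoc]
  | succ j ih =>
    intro hj
    have ih' := ih (by omega)
    have hk := hTk j (by omega)
    calc A ^ (j + 1) * (V * firstCols (2 * m * p) p)
        = A * (A ^ j * (V * firstCols (2 * m * p) p)) := by
          rw [pow_succ', Matrix.mul_assoc]
      _ = A * V * (T ^ j * firstCols (2 * m * p) p) := by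
          rw [ih', Matrix.mul_assoc, Matrix.mul_assoc]
      _ = V * T ^ (j + 1) * firstCols (2 * m * p) p := by
          rw [hdec, Matrix.add_mul, pow_succ']
          rw [show K * (lastCols (2 * m * p) (2 * p))ᵀ * (T ^ j * firstCols (2 * m * p) p)
              = K * ((lastCols (2 * m * p) (2 * p))ᵀ * T ^ j * firstCols (2 * m * p) p) by
            simp [Matrix.mul_assoc]]
          rw [hk]
          simp [Matrix.mul_assoc]
end

section
/- Let A ∈ ℝ^{n×n} be invertible, V ∈ ℝ^{n×N} with N = 2mp, S ∈ ℝ^{N×N}, and K ∈ ℝ^{n×2p}. Let E₁ ∈ ℝ^{N×p} denote the first p columns of the N×N identity matrix and E_m ∈ ℝ^{N×2p} the last 2p columns. Suppose A⁻¹·V = V·S + K·E_mᵀ and E_mᵀ·S^k·E₁ = 0 for every integer k with 0 ≤ k ≤ m−1. Set V₁ := V·E₁. Then for every integer j with 0 ≤ j ≤ m, one has A^{−j}·V₁ = V·S^j·E₁. -/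
open Matrix

/-- If `A` is invertible, `A⁻¹·V = V·S + K·E_mᵀ`, and `E_mᵀ·S^k·E₁ = 0` for
`0 ≤ k ≤ m − 1`, then with `V₁ := V·E₁`, one has `A^{−j}·V₁ = V·S^j·E₁` for `0 ≤ j ≤ m`. -/
theorem exactness_negative_powers
    (n p m : ℕ) (hn : 0 < n) (hp : 0 < p) (hm : 0 < m)
    (A : Matrix (Fin n) (Fin n) ℝ) (hA : IsUnit A.det)
    (V : Matrix (Fin n) (Fin (2 * m * p)) ℝ)
    (S : Matrix (Fin (2 * m * p)) (Fin (2 * m * p)) ℝ)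
    (K : Matrix (Fin n) (Fin (2 * p)) ℝ)
    (hdec : A⁻¹ * V = V * S + K * (lastCols (2 * m * p) (2 * p))ᵀ)
    (hSk : ∀ k : ℕ, k ≤ m - 1 →
      (lastCols (2 * m * p) (2 * p))ᵀ * S ^ k * firstCols (2 * m * p) p = 0) :
    ∀ j : ℕ, j ≤ m →
      A⁻¹ ^ j * (V * firstCols (2 * m * p) p) = V * S ^ j * firstCols (2 * m * p) p := by
  intro j
  induction j with
  | zero => intro _; simp
  | succ j ih =>
    intro hj
    have hj' : j ≤ m := Nat.le_of_succ_le hj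
    have hjm : j ≤ m - 1 := Nat.le_sub_one_of_lt hj
    have := ih hj'
    calc A⁻¹ ^ (j + 1) * (V * firstCols (2 * m * p) p)
        = A⁻¹ * (A⁻¹ ^ j * (V * firstCols (2 * m * p) p)) := by
          rw [pow_succ', Matrix.mul_assoc]
      _ = A⁻¹ * (V * S ^ j * firstCols (2 * m * p) p) := by rw [this]
      _ = (A⁻¹ * V) * S ^ j * firstCols (2 * m * p) p := by
          simp [Matrix.mul_assoc]
      _ = (V * S + K * (lastCols (2 * m * p) (2 * p))ᵀ) * S ^ j * firstCols (2 * m * p) p := by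
          rw [hdec]
      _ = V * S ^ (j + 1) * firstCols (2 * m * p) p
          + K * ((lastCols (2 * m * p) (2 * p))ᵀ * S ^ j * firstCols (2 * m * p) p) := by
          rw [Matrix.add_mul, Matrix.add_mul]
          rw [pow_succ']
          simp [Matrix.mul_assoc]
      _ = V * S ^ (j + 1) * firstCols (2 * m * p) p := by
          rw [hSk j hjm, Matrix.mul_zero, add_zero]
end

section
/- Let A ∈ ℝ^{n×n} be invertible, let V ∈ ℝ^{n×N} with N = 2mp, let L ∈ ℝ^{N×n} be a left inverse of V (L·V = I_N), and set T := L·A·V and S := L·A⁻¹·V. Let E₁ ∈ ℝ^{N×p} denote the first p columns of the N×N identity matrix and E_m ∈ ℝ^{N×2p} the last 2p columns. Suppose T is invertible, A⁻¹·V = V·S + K·E_mᵀ for some K ∈ ℝ^{n×2p}, and E_mᵀ·S^k·E₁ = 0 for every integer k with 0 ≤ k ≤ m−1. Set V₁ := V·E₁. Then for every integer j with 0 ≤ j ≤ m, one has A^{−j}·V₁ = V·T^{−j}·E₁. -/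
open Matrix

/-- With `T := L·A·V` and `S := L·A⁻¹·V`, if `T` is invertible,
`A⁻¹·V = V·S + K·E_mᵀ`, and `E_mᵀ·S^k·E₁ = 0` for `0 ≤ k ≤ m − 1`, then with
`V₁ := V·E₁`, one has `A^{−j}·V₁ = V·T^{−j}·E₁` for `0 ≤ j ≤ m`. -/
theorem exactness_negative_powers_T
    (n p m : ℕ) (hn : 0 < n) (hp : 0 < p) (hm : 0 < m)
    (A : Matrix (Fin n) (Fin n) ℝ) (hA : IsUnit A.det)
    (V : Matrix (Fin n) (Fin (2 * m * p)) ℝ)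
    (L : Matrix (Fin (2 * m * p)) (Fin n) ℝ) (hL : L * V = 1)
    (hT : IsUnit (L * A * V).det)
    (K : Matrix (Fin n) (Fin (2 * p)) ℝ)
    (hdec : A⁻¹ * V = V * (L * A⁻¹ * V) + K * (lastCols (2 * m * p) (2 * p))ᵀ)
    (hSk : ∀ k : ℕ, k ≤ m - 1 →
      (lastCols (2 * m * p) (2 * p))ᵀ * (L * A⁻¹ * V) ^ k * firstCols (2 * m * p) p = 0) :
    ∀ j : ℕ, j ≤ m →
      A⁻¹ ^ j * (V * firstCols (2 * m * p) p)
        = V * (L * A * V)⁻¹ ^ j * firstCols (2 * m * p) p := by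
  set E1 := firstCols (2 * m * p) p with hE1
  set Em := lastCols (2 * m * p) (2 * p) with hEm
  set S := L * A⁻¹ * V with hSdef
  set T := L * A * V with hTdef
  have hAA : A * A⁻¹ = 1 := Matrix.mul_nonsing_inv A hA
  have hTT : T⁻¹ * T = 1 := Matrix.nonsing_inv_mul T hT
  -- Step 1: A⁻¹^j * (V * E1) = V * (S^j * E1) for j ≤ m
  have key1 : ∀ j : ℕ, j ≤ m → A⁻¹ ^ j * (V * E1) = V * (S ^ j * E1) := by
    intro j hj
    induction j with
    | zero => simp
    | succ j ih =>
      have hj' : j ≤ m := Nat.le_of_succ_le hj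
      have hk : j ≤ m - 1 := Nat.le_sub_one_of_lt hj
      have h0 := hSk j hk
      calc A⁻¹ ^ (j + 1) * (V * E1)
          = A⁻¹ * (A⁻¹ ^ j * (V * E1)) := by rw [pow_succ']; rw [Matrix.mul_assoc]
        _ = A⁻¹ * (V * (S ^ j * E1)) := by rw [ih hj']
        _ = (A⁻¹ * V) * (S ^ j * E1) := by rw [Matrix.mul_assoc]
        _ = (V * S + K * Emᵀ) * (S ^ j * E1) := by rw [hdec]
        _ = V * (S ^ (j + 1) * E1) + K * (Emᵀ * S ^ j * E1) := by
              rw [Matrix.add_mul]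
              rw [pow_succ']
              simp only [Matrix.mul_assoc]
        _ = V * (S ^ (j + 1) * E1) := by rw [h0, Matrix.mul_zero, add_zero]
  -- Step 2: T * (S^(k+1) * E1) = S^k * E1 for k ≤ m - 1
  have step : ∀ k : ℕ, k ≤ m - 1 → T * (S ^ (k + 1) * E1) = S ^ k * E1 := by
    intro k hk
    have h0 := hSk k hk
    have hVS : V * S = A⁻¹ * V - K * Emᵀ := by rw [hdec, add_sub_cancel_right]
    calc T * (S ^ (k + 1) * E1)
        = L * A * (V * S) * (S ^ k * E1) := by
          rw [pow_succ']
          simp only [hTdef, Matrix.mul_assoc]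
      _ = L * A * (A⁻¹ * V - K * Emᵀ) * (S ^ k * E1) := by rw [hVS]
      _ = L * (A * A⁻¹) * V * (S ^ k * E1) - L * A * K * (Emᵀ * S ^ k * E1) := by
          rw [Matrix.mul_sub, Matrix.sub_mul]
          simp only [Matrix.mul_assoc]
      _ = S ^ k * E1 := by
          rw [hAA, Matrix.mul_one, hL, Matrix.one_mul, h0, Matrix.mul_zero, sub_zero]
  -- Step 3: S^j * E1 = T⁻¹^j * E1 for j ≤ m
  have key2 : ∀ j : ℕ, j ≤ m → S ^ j * E1 = T⁻¹ ^ j * E1 := by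
    intro j hj
    induction j with
    | zero => simp
    | succ j ih =>
      have hj' : j ≤ m := Nat.le_of_succ_le hj
      have hk : j ≤ m - 1 := Nat.le_sub_one_of_lt hj
      have := step j hk
      calc S ^ (j + 1) * E1
          = (T⁻¹ * T) * (S ^ (j + 1) * E1) := by rw [hTT, Matrix.one_mul]
        _ = T⁻¹ * (T * (S ^ (j + 1) * E1)) := by simp only [Matrix.mul_assoc]
        _ = T⁻¹ * (S ^ j * E1) := by rw [this]
        _ = T⁻¹ * (T⁻¹ ^ j * E1) := by rw [ih hj']
        _ = T⁻¹ ^ (j + 1) * E1 := by rw [pow_succ', Matrix.mul_assoc]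
  intro j hj
  rw [key1 j hj, key2 j hj, Matrix.mul_assoc]
end

section
/- Let A ∈ ℝ^{n×n} be invertible, let V ∈ ℝ^{n×N} with N = 2mp, let L ∈ ℝ^{N×n} be a left inverse of V (L·V = I_N), and set T := L·A·V and S := L·A⁻¹·V. Let E₁ ∈ ℝ^{N×p} denote the first p columns of the N×N identity matrix and E_m ∈ ℝ^{N×2p} the last 2p columns. Suppose T is invertible, A·V = V·T + K₁·E_mᵀ and A⁻¹·V = V·S + K₂·E_mᵀ for some K₁, K₂ ∈ ℝ^{n×2p}, E_mᵀ·T^k·E₁ = 0 for 0 ≤ k ≤ m−2, and E_mᵀ·S^k·E₁ = 0 for 0 ≤ k ≤ m−1. Set V₁ := V·E₁. Then for all real coefficients c_{−m}, c_{−m+1}, …, c_{m−1}, one has Σ_{j=−m}^{m−1} c_j·A^j·V₁ = V·(Σ_{j=−m}^{m−1} c_j·T^j)·E₁; that is, the extended Krylov approximation is exact for every Laurent polynomial of positive degree at most m−1 and negative degree at most m. -/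
open Matrix

/-- The extended Krylov approximation is exact for Laurent polynomials of
positive degree at most `m − 1` and negative degree at most `m`: with `T := L·A·V`,
`Σ_{j=−m}^{m−1} c_j·A^j·V₁ = V·(Σ_{j=−m}^{m−1} c_j·T^j)·E₁`. -/
theorem exactness_laurent_polynomials
    (n p m : ℕ) (hn : 0 < n) (hp : 0 < p) (hm : 0 < m)
    (A : Matrix (Fin n) (Fin n) ℝ) (hA : IsUnit A.det)
    (V : Matrix (Fin n) (Fin (2 * m * p)) ℝ)
    (L : Matrix (Fin (2 * m * p)) (Fin n) ℝ) (hL : L * V = 1)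
    (hT : IsUnit (L * A * V).det)
    (K₁ K₂ : Matrix (Fin n) (Fin (2 * p)) ℝ)
    (hdec1 : A * V = V * (L * A * V) + K₁ * (lastCols (2 * m * p) (2 * p))ᵀ)
    (hdec2 : A⁻¹ * V = V * (L * A⁻¹ * V) + K₂ * (lastCols (2 * m * p) (2 * p))ᵀ)
    (hTk : ∀ k : ℕ, k ≤ m - 2 →
      (lastCols (2 * m * p) (2 * p))ᵀ * (L * A * V) ^ k * firstCols (2 * m * p) p = 0)
    (hSk : ∀ k : ℕ, k ≤ m - 1 →
      (lastCols (2 * m * p) (2 * p))ᵀ * (L * A⁻¹ * V) ^ k * firstCols (2 * m * p) p = 0)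
    (c : ℤ → ℝ) :
    ∑ j ∈ Finset.Icc (-(m : ℤ)) ((m : ℤ) - 1),
        c j • (A ^ j * (V * firstCols (2 * m * p) p))
      = V * (∑ j ∈ Finset.Icc (-(m : ℤ)) ((m : ℤ) - 1), c j • (L * A * V) ^ j)
          * firstCols (2 * m * p) p := by
  set T := L * A * V with hTdef
  set S := L * A⁻¹ * V with hSdef
  set E1 := firstCols (2 * m * p) p with hE1
  set Em := lastCols (2 * m * p) (2 * p) with hEm
  have hAA : A * A⁻¹ = 1 := Matrix.mul_nonsing_inv A hA
  have hTT : T⁻¹ * T = 1 := Matrix.nonsing_inv_mul T hT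
  -- the identity 1 = T * S + (L*A*K₂) * Emᵀ
  have hid : (1 : Matrix (Fin (2 * m * p)) (Fin (2 * m * p)) ℝ)
      = T * S + (L * A * K₂) * Emᵀ := by
    have h1 : L * A * (A⁻¹ * V) = 1 := by
      rw [← Matrix.mul_assoc, Matrix.mul_assoc L A A⁻¹, hAA, Matrix.mul_one, hL]
    calc (1 : Matrix (Fin (2 * m * p)) (Fin (2 * m * p)) ℝ)
        = L * A * (A⁻¹ * V) := h1.symm
      _ = L * A * (V * S + K₂ * Emᵀ) := by rw [hdec2]
      _ = T * S + (L * A * K₂) * Emᵀ := by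
          rw [hTdef]; simp only [Matrix.mul_add, Matrix.mul_assoc]
  have hTinvS : T⁻¹ = S + T⁻¹ * (L * A * K₂) * Emᵀ := by
    calc T⁻¹ = T⁻¹ * 1 := (Matrix.mul_one _).symm
      _ = T⁻¹ * (T * S + (L * A * K₂) * Emᵀ) := by rw [← hid]
      _ = (T⁻¹ * T) * S + T⁻¹ * (L * A * K₂) * Emᵀ := by
          simp only [Matrix.mul_add, Matrix.mul_assoc]
      _ = S + T⁻¹ * (L * A * K₂) * Emᵀ := by rw [hTT, Matrix.one_mul]
  -- Claim B: T⁻¹^k * E1 = S^k * E1 for k ≤ m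
  have hB : ∀ k : ℕ, k ≤ m → T⁻¹ ^ k * E1 = S ^ k * E1 := by
    intro k
    induction k with
    | zero => intro _; rfl
    | succ k ih =>
      intro hk
      have hk1 : k ≤ m := Nat.le_of_succ_le hk
      have hk2 : k ≤ m - 1 := by omega
      have hz' : Emᵀ * (S ^ k * E1) = 0 := by
        rw [← Matrix.mul_assoc]; exact hSk k hk2
      rw [pow_succ', pow_succ', Matrix.mul_assoc, Matrix.mul_assoc, ih hk1, hTinvS]
      simp only [Matrix.add_mul, Matrix.mul_assoc, hz', Matrix.mul_zero, add_zero]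
  -- Claim C: A⁻¹^k * (V * E1) = V * (S^k * E1) for k ≤ m
  have hC : ∀ k : ℕ, k ≤ m → A⁻¹ ^ k * (V * E1) = V * (S ^ k * E1) := by
    intro k
    induction k with
    | zero => intro _; simp
    | succ k ih =>
      intro hk
      have hk1 : k ≤ m := Nat.le_of_succ_le hk
      have hk2 : k ≤ m - 1 := by omega
      have hz' : Emᵀ * (S ^ k * E1) = 0 := by
        rw [← Matrix.mul_assoc]; exact hSk k hk2
      rw [pow_succ', Matrix.mul_assoc, ih hk1, ← Matrix.mul_assoc, hdec2, pow_succ']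
      simp only [Matrix.add_mul, Matrix.mul_assoc, hz', Matrix.mul_zero, add_zero]
  -- Claim D: A^k * (V * E1) = V * (T^k * E1) for k < m
  have hD : ∀ k : ℕ, k < m → A ^ k * (V * E1) = V * (T ^ k * E1) := by
    intro k
    induction k with
    | zero => intro _; simp
    | succ k ih =>
      intro hk
      have hk1 : k < m := Nat.lt_of_succ_lt hk
      have hk2 : k ≤ m - 2 := by omega
      have hz' : Emᵀ * (T ^ k * E1) = 0 := by
        rw [← Matrix.mul_assoc]; exact hTk k hk2
      rw [pow_succ', Matrix.mul_assoc, ih hk1, ← Matrix.mul_assoc, hdec1, pow_succ']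
      simp only [Matrix.add_mul, Matrix.mul_assoc, hz', Matrix.mul_zero, add_zero]
  -- termwise equality
  have key : ∀ j : ℤ, -(m : ℤ) ≤ j → j ≤ (m : ℤ) - 1 →
      A ^ j * (V * E1) = V * (T ^ j * E1) := by
    intro j h1 h2
    rcases le_or_gt 0 j with h0 | h0
    · obtain ⟨k, rfl⟩ := Int.eq_ofNat_of_zero_le h0
      have hk : k < m := by omega
      rw [zpow_natCast, zpow_natCast]
      exact hD k hk
    · obtain ⟨k, hk⟩ : ∃ k : ℕ, j = -(k : ℤ) := ⟨(-j).toNat, by omega⟩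
      have hk1 : k ≤ m := by omega
      subst hk
      rw [Matrix.zpow_neg_natCast, Matrix.zpow_neg_natCast, ← Matrix.inv_pow',
        ← Matrix.inv_pow', hC k hk1, hB k hk1]
  rw [Matrix.mul_sum, Matrix.sum_mul]
  refine Finset.sum_congr rfl ?_
  intro j hj
  simp only [Finset.mem_Icc] at hj
  rw [Matrix.mul_smul, Matrix.smul_mul]
  congr 1
  rw [Matrix.mul_assoc]
  exact key j hj.1 hj.2
end

section
/- Let A ∈ ℝ^{n×n}, V ∈ ℝ^{n×N}, T ∈ ℝ^{N×N}, and W ∈ ℝ^{n×N} satisfy A·V = V·T + W. Let E₁ ∈ ℝ^{N×p} denote the first p columns of the N×N identity matrix, let Γ ∈ ℝ^{p×p}, and set V₁ := V·E₁. Then for every t ≥ 0, exp(tA)·V₁·Γ − V·exp(tT)·E₁·Γ = ∫₀ᵗ exp((t−s)A)·W·exp(sT)·E₁·Γ ds, where exp denotes the matrix exponential. -/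
open Matrix

/-!
Duhamel's formula: `F(s) = exp((t-s)A) V exp(sT) B` has derivative
`exp((t-s)A) (VT - AV) exp(sT) B = -exp((t-s)A) W exp(sT) B`, and `F(0) - F(t)` is the left-hand
side, so the fundamental theorem of calculus gives the identity.
-/

open NormedSpace (exp)

namespace Matrix

variable {l m n : Type*} [Fintype l] [Fintype m] [Fintype n]

section LinftyOp

/- `HasDerivAt` only sees the topology of `Matrix`, so these norms are used in proofs but do not
occur in any statement. -/
attribute [local instance] Matrix.linftyOpNormedAddCommGroup Matrix.linftyOpNormedSpace
  Matrix.linftyOpNormedRing Matrix.linftyOpNormedAlgebra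

theorem _root_.HasDerivAt.matrix_mul {f : ℝ → Matrix l m ℝ} {g : ℝ → Matrix m n ℝ}
    {f' : Matrix l m ℝ} {g' : Matrix m n ℝ} {s : ℝ} (hf : HasDerivAt f f' s)
    (hg : HasDerivAt g g' s) :
    HasDerivAt (fun u => f u * g u) (f' * g s + f s * g') s := by
  let mulCLM : Matrix l m ℝ →L[ℝ] Matrix m n ℝ →L[ℝ] Matrix l n ℝ :=
    LinearMap.mkContinuous₂ (LinearMap.mk₂ ℝ (· * ·) Matrix.add_mul Matrix.smul_mul
      Matrix.mul_add fun c A B => Matrix.mul_smul A c B) 1 fun A B => by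
        simpa using linfty_opNorm_mul A B
  rw [add_comm]
  exact mulCLM.hasDerivAt_of_bilinear (fun _ => hf) (fun _ => hg)

theorem _root_.HasDerivAt.matrix_apply {f : ℝ → Matrix m n ℝ} {f' : Matrix m n ℝ} {s : ℝ}
    (hf : HasDerivAt f f' s) (i : m) (j : n) : HasDerivAt (fun u => f u i j) (f' i j) s :=
  (entryLinearMap ℝ ℝ i j).toContinuousLinearMap.hasFDerivAt.comp_hasDerivAt s hf

variable [DecidableEq l] [DecidableEq m]

theorem hasDerivAt_exp_smul_const (M : Matrix m m ℝ) (s : ℝ) :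
    HasDerivAt (fun u : ℝ => exp (u • M)) (exp (s • M) * M) s :=
  _root_.hasDerivAt_exp_smul_const M s

theorem hasDerivAt_exp_smul_const' (M : Matrix m m ℝ) (s : ℝ) :
    HasDerivAt (fun u : ℝ => exp (u • M)) (M * exp (s • M)) s :=
  _root_.hasDerivAt_exp_smul_const' M s

theorem hasDerivAt_exp_sub_smul_mul_mul_exp_smul (A : Matrix l l ℝ) (V : Matrix l m ℝ)
    (T : Matrix m m ℝ) (B : Matrix m n ℝ) (t s : ℝ) :
    HasDerivAt (fun u : ℝ => exp ((t - u) • A) * V * exp (u • T) * B)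
      (exp ((t - s) • A) * (V * T - A * V) * exp (s • T) * B) s := by
  have hA : HasDerivAt (fun u : ℝ => exp ((t - u) • A)) (-(exp ((t - s) • A) * A)) s := by
    have h := (hasDerivAt_exp_smul_const A (t - s)).scomp s ((hasDerivAt_id s).const_sub t)
    simp only [Function.comp_def, neg_smul, one_smul] at h
    exact h
  refine (((hA.matrix_mul (hasDerivAt_const s V)).matrix_mul
    (hasDerivAt_exp_smul_const' T s)).matrix_mul (hasDerivAt_const s B)).congr_deriv ?_
  simp only [Matrix.mul_sub, Matrix.sub_mul, Matrix.add_mul, Matrix.neg_mul, Matrix.mul_assoc,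
    Matrix.mul_zero, add_zero]
  abel

end LinftyOp

theorem exp_smul_mul_sub_mul_exp_smul_apply_eq_integral [DecidableEq l] [DecidableEq m]
    {A : Matrix l l ℝ} {V W : Matrix l m ℝ} {T : Matrix m m ℝ} (hAV : A * V = V * T + W) (B : Matrix m n ℝ) (t : ℝ) (i : l) (j : n) :
    (exp (t • A) * V * B - V * exp (t • T) * B) i j
      = ∫ s in (0 : ℝ)..t, (exp ((t - s) • A) * W * exp (s • T) * B) i j := by
  have hF (s : ℝ) : HasDerivAt (fun u : ℝ => (exp ((t - u) • A) * V * exp (u • T) * B) i j)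
      (-(exp ((t - s) • A) * W * exp (s • T) * B) i j) s := by
    simpa [hAV, Matrix.mul_neg, Matrix.neg_mul] using
      (hasDerivAt_exp_sub_smul_mul_mul_exp_smul A V T B t s).matrix_apply i j
  have hG : Continuous fun s : ℝ => (exp ((t - s) • A) * W * exp (s • T) * B) i j :=
    continuous_iff_continuousAt.2 fun s =>
      ((hasDerivAt_exp_sub_smul_mul_mul_exp_smul A W T B t s).matrix_apply i j).continuousAt
  have hFTC := intervalIntegral.integral_eq_sub_of_hasDerivAt (fun s _ => hF s)
    (hG.neg.intervalIntegrable 0 t)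
  simp only [intervalIntegral.integral_neg, sub_self, sub_zero, zero_smul, NormedSpace.exp_zero,
    Matrix.one_mul, Matrix.mul_one] at hFTC
  rw [Matrix.sub_apply]
  linarith

end Matrix

theorem error_integral_representation_general
    (n p N : ℕ)
    (A : Matrix (Fin n) (Fin n) ℝ)
    (V W : Matrix (Fin n) (Fin N) ℝ)
    (T : Matrix (Fin N) (Fin N) ℝ)
    (hdec : A * V = V * T + W)
    (Γ : Matrix (Fin p) (Fin p) ℝ)
    (t : ℝ) :
    ∀ i j,
      (NormedSpace.exp (t • A) * (V * firstCols N p) * Γ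
        - V * NormedSpace.exp (t • T) * firstCols N p * Γ) i j
      = ∫ s in (0 : ℝ)..t,
          (NormedSpace.exp ((t - s) • A) * W * NormedSpace.exp (s • T)
            * firstCols N p * Γ) i j := by
  intro i j
  simpa only [Matrix.mul_assoc] using
    Matrix.exp_smul_mul_sub_mul_exp_smul_apply_eq_integral hdec (firstCols N p * Γ) t i j

/-- If `A·V = V·T + W`, then for every `t ≥ 0` and `V₁ := V·E₁`,
`exp(tA)·V₁·Γ − V·exp(tT)·E₁·Γ = ∫₀ᵗ exp((t−s)A)·W·exp(sT)·E₁·Γ ds` (entrywise). -/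
theorem error_integral_representation
    (n p N : ℕ) (hn : 0 < n) (hp : 0 < p) (hN : 0 < N)
    (A : Matrix (Fin n) (Fin n) ℝ)
    (V W : Matrix (Fin n) (Fin N) ℝ)
    (T : Matrix (Fin N) (Fin N) ℝ)
    (hdec : A * V = V * T + W)
    (Γ : Matrix (Fin p) (Fin p) ℝ)
    (t : ℝ) (ht : 0 ≤ t) :
    ∀ i j,
      (NormedSpace.exp (t • A) * (V * firstCols N p) * Γ
        - V * NormedSpace.exp (t • T) * firstCols N p * Γ) i j
      = ∫ s in (0 : ℝ)..t,
          (NormedSpace.exp ((t - s) • A) * W * NormedSpace.exp (s • T)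
            * firstCols N p * Γ) i j :=
  error_integral_representation_general n p N A V W T hdec Γ t
end

section
/- Let A ∈ ℝ^{n×n}, V ∈ ℝ^{n×N} with N = 2mp, T ∈ ℝ^{N×N}, W ∈ ℝ^{n×p}, and τ ∈ ℝ^{p×2p} satisfy A·V = V·T + W·τ·E_mᵀ, where E_m ∈ ℝ^{N×2p} denotes the last 2p columns of the N×N identity matrix. Let E₁ ∈ ℝ^{N×p} denote the first p columns of the N×N identity matrix, set V₁ := V·E₁, and let Γ ∈ ℝ^{p×p}, σ ∈ ℝ, and C, X₀ ∈ ℝ^{n×p} be such that the initial residual satisfies C − (A + σI_n)·X₀ = V₁·Γ. Let Y ∈ ℝ^{N×p} solve the reduced system (T + σI_N)·Y = E₁·Γ, and set X := X₀ + V·Y. Then the residual satisfies C − (A + σI_n)·X = −W·τ·E_mᵀ·Y. -/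
open Matrix

/-- With `A·V = V·T + W·τ·E_mᵀ`, `V₁ := V·E₁`, initial residual
`C − (A + σI)·X₀ = V₁·Γ`, reduced system `(T + σI)·Y = E₁·Γ`, and `X := X₀ + V·Y`,
the residual satisfies `C − (A + σI)·X = −W·τ·E_mᵀ·Y`. -/
theorem shifted_system_residual_formula
    (n p m : ℕ) (hn : 0 < n) (hp : 0 < p) (hm : 0 < m)
    (A : Matrix (Fin n) (Fin n) ℝ)
    (V : Matrix (Fin n) (Fin (2 * m * p)) ℝ)
    (T : Matrix (Fin (2 * m * p)) (Fin (2 * m * p)) ℝ)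
    (W : Matrix (Fin n) (Fin p) ℝ)
    (τ : Matrix (Fin p) (Fin (2 * p)) ℝ)
    (hdec : A * V = V * T + W * τ * (lastCols (2 * m * p) (2 * p))ᵀ)
    (Γ : Matrix (Fin p) (Fin p) ℝ) (σ : ℝ)
    (C X₀ : Matrix (Fin n) (Fin p) ℝ)
    (hres : C - (A + σ • (1 : Matrix (Fin n) (Fin n) ℝ)) * X₀
      = V * firstCols (2 * m * p) p * Γ)
    (Y : Matrix (Fin (2 * m * p)) (Fin p) ℝ)
    (hY : (T + σ • (1 : Matrix (Fin (2 * m * p)) (Fin (2 * m * p)) ℝ)) * Y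
      = firstCols (2 * m * p) p * Γ) :
    C - (A + σ • (1 : Matrix (Fin n) (Fin n) ℝ)) * (X₀ + V * Y)
      = -(W * τ * (lastCols (2 * m * p) (2 * p))ᵀ * Y) := by
  have key : (A + σ • (1 : Matrix (Fin n) (Fin n) ℝ)) * (V * Y)
      = V * firstCols (2 * m * p) p * Γ
        + W * τ * (lastCols (2 * m * p) (2 * p))ᵀ * Y := by
    have h1 : (A + σ • (1 : Matrix (Fin n) (Fin n) ℝ)) * (V * Y)
        = A * V * Y + σ • (V * Y) := by
      rw [Matrix.add_mul, Matrix.smul_mul, Matrix.one_mul, Matrix.mul_assoc]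
    rw [h1, hdec, Matrix.add_mul]
    have h2 : V * T * Y + σ • (V * Y)
        = V * ((T + σ • (1 : Matrix (Fin (2 * m * p)) (Fin (2 * m * p)) ℝ)) * Y) := by
      rw [Matrix.add_mul, Matrix.smul_mul, Matrix.one_mul, Matrix.mul_add,
        Matrix.mul_smul, Matrix.mul_assoc]
    rw [add_right_comm, h2, hY, ← Matrix.mul_assoc]
  have expand : C - (A + σ • (1 : Matrix (Fin n) (Fin n) ℝ)) * (X₀ + V * Y)
      = (C - (A + σ • (1 : Matrix (Fin n) (Fin n) ℝ)) * X₀)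
        - (A + σ • (1 : Matrix (Fin n) (Fin n) ℝ)) * (V * Y) := by
    rw [Matrix.mul_add]; abel
  rw [expand, hres, key]; abel
end
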